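/- arXiv:1406.6122 — 3 statements merged into one kernel-verified Lean document; each statement's English description precedes it below -/
import Mathlib

section
/- Let q be a prime power and ψ : F_{q^2} → ℂ× a nontrivial additive character whose Galois stabilizer in Gal(F_{q^2}/F_q) is trivial (i.e. there exists x with ψ(x^q) ≠ ψ(x)). Then every additive character of F_{q^2} is of the form y ↦ ψ(x·y^q − x^q·y) for some x ∈ F_{q^2}. -/
/-- For a nontrivial additive character ψ of F_{q²} with trivial
Galois stabilizer (∃ x, ψ(x^q) ≠ ψ(x)), every additive character of F_{q²} is
of the form y ↦ ψ(x·y^q − x^q·y) for some x. -/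
theorem stmt_0 (p m q : ℕ) (hp : p.Prime) (hm : 0 < m) (hq : q = p ^ m)
    (F : Type) [Field F] [Fintype F] (hF : Fintype.card F = q ^ 2)
    (ψ : AddChar F ℂ) (hnt : ψ ≠ 1) (hψ : ∃ x : F, ψ (x ^ q) ≠ ψ x) :
    ∀ χ : AddChar F ℂ, ∃ x : F, ∀ y : F, χ y = ψ (x * y ^ q - x ^ q * y) := by
  haveI : Fact p.Prime := ⟨hp⟩
  have hcard : Fintype.card F = p ^ (2 * m) := by
    rw [hF, hq, ← pow_mul, mul_comm]
  -- characteristic of F is p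
  have hchar : CharP F p := by
    have h1 : CharP F (ringChar F) := ringChar.charP F
    have h2 : (ringChar F).Prime := CharP.char_is_prime F (ringChar F)
    have h3 : ringChar F ∣ p ^ (2 * m) := by
      rw [← CharP.cast_eq_zero_iff F (ringChar F), ← hcard]
      exact Nat.cast_card_eq_zero F
    have h4 : ringChar F = p :=
      (Nat.prime_dvd_prime_iff_eq h2 hp).mp (h2.dvd_of_dvd_pow h3)
    rwa [h4] at h1
  haveI := hchar
  have hq0 : q ≠ 0 := by rw [hq]; exact (pow_pos hp.pos m).ne'
  -- Frobenius facts
  have hfrob : ∀ x y : F, (x + y) ^ q = x ^ q + y ^ q := by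
    intro x y; rw [hq]; exact add_pow_char_pow x y p m
  have hfrobs : ∀ x y : F, (x - y) ^ q = x ^ q - y ^ q := by
    intro x y
    have h := hfrob (x - y) y
    rw [sub_add_cancel] at h
    rw [h]; ring
  -- define the map f
  let f : F → AddChar F ℂ := fun x =>
    { toFun := fun y => ψ (x * y ^ q - x ^ q * y)
      map_zero_eq_one' := by simp [zero_pow hq0]
      map_add_eq_mul' := by
        intro a b
        show ψ (x * (a + b) ^ q - x ^ q * (a + b)) =
          ψ (x * a ^ q - x ^ q * a) * ψ (x * b ^ q - x ^ q * b)
        rw [← AddChar.map_add_eq_mul, hfrob]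
        congr 1; ring }
  have hf_apply : ∀ x y : F, f x y = ψ (x * y ^ q - x ^ q * y) := fun _ _ => rfl
  have hne : ∀ a : F, ψ a ≠ 0 := by
    intro a ha
    have := AddChar.map_add_eq_mul ψ a (-a)
    rw [add_neg_cancel, AddChar.map_zero_eq_one, ha, zero_mul] at this
    exact one_ne_zero this
  -- key: f x trivial implies x = 0
  have key : ∀ x : F, (∀ y : F, ψ (x * y ^ q - x ^ q * y) = 1) → x = 0 := by
    intro x hx
    by_contra hx0
    obtain ⟨x₀, hx₀⟩ := hψ
    set c : F := x ^ (q + 1) with hc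
    have hcq : c ^ q = c := by
      have hxq2 : x ^ (q ^ 2) = x := by
        have := FiniteField.pow_card x
        rwa [hF] at this
      rw [hc, ← pow_mul]
      have h5 : x ^ ((q + 1) * q) = x ^ (q ^ 2) * x ^ q := by
        rw [← pow_add]; ring_nf
      rw [h5, hxq2, mul_comm, ← pow_succ]
    have hc0 : c ≠ 0 := pow_ne_zero _ hx0
    have h1 := hx (x * (x₀ / c))
    have he : x * (x * (x₀ / c)) ^ q - x ^ q * (x * (x₀ / c)) = x₀ ^ q - x₀ := by
      rw [mul_pow, div_pow, hcq]
      field_simp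
      ring
    rw [he] at h1
    apply hx₀
    have h6 := AddChar.map_add_eq_mul ψ (x₀ ^ q - x₀) x₀
    rw [h1, one_mul, sub_add_cancel] at h6
    exact h6
  have hfinj : Function.Injective f := by
    intro a b hab
    have h7 : ∀ y : F, ψ ((a - b) * y ^ q - (a - b) ^ q * y) = 1 := by
      intro y
      have h1 : f a y = f b y := by rw [hab]
      rw [hf_apply, hf_apply] at h1
      have h2 : (a - b) * y ^ q - (a - b) ^ q * y
          = (a * y ^ q - a ^ q * y) + -(b * y ^ q - b ^ q * y) := by
        rw [hfrobs]; ring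
      rw [h2, AddChar.map_add_eq_mul, AddChar.map_neg_eq_inv, h1,
        mul_inv_cancel₀ (hne _)]
    have := key _ h7
    exact sub_eq_zero.mp this
  have hfsurj : Function.Surjective f :=
    ((Fintype.bijective_iff_injective_and_card f).mpr
      ⟨hfinj, AddChar.card_eq.symm⟩).surjective
  intro χ
  obtain ⟨x, hx⟩ := hfsurj χ
  exact ⟨x, fun y => by rw [← hx, hf_apply]⟩
end

section
/- Let q be a prime power, F = F_{q^2}, and consider the group U = U_2^{2,q}(F) = {1 + aτ + bτ² : a, b ∈ F} with multiplication (1+aτ+bτ²)(1+cτ+dτ²) = 1 + (a+c)τ + (b + d + a c^q)τ². Let ψ : F → ℂ× be an additive character with trivial Gal(F/F_q)-stabilizer, let A = {1 + aτ + bτ² : a ∈ F_q} ≤ U, and let ψ̃ : A → ℂ× be any character with ψ̃(1 + bτ²) = ψ(b). Then Ind_A^U(ψ̃) is an irreducible representation of U of dimension q. -/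
/-!
Let `K = {a | a ^ q = a}`, a copy of `F_q` inside `F`. By equivariance, a function in the induced
space is determined by its values at the points `(c, 0)`, one for each coset `c + K`, and these
values are arbitrary; hence the dimension is `[F : K] = q`.
Right translation by `(a, 0)` with `a ∈ K` multiplies the part of `f` lying over the coset of `x.1`
by `ψ (a * (x.1 - x.1 ^ q))`. These characters of `K` differ on different cosets because `ψ` is
nontrivial on `{z | z ^ q = -z} = K * z` for any `z ≠ 0` in it, so averaging over `K` cuts a
nonzero invariant subspace down to each single coset part, which is one-dimensional; translations
then move between cosets, so the subspace is everything (Mackey's criterion, done by hand).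
-/

noncomputable def indSubspaceU2 (q : ℕ) (F : Type) [Field F] (ψt : F → F → ℂ) :
    Submodule ℂ (F × F → ℂ) :=
  ⨅ (a : {a : F // a ^ q = a}) (b : F) (x : F × F),
    LinearMap.ker
      ((LinearMap.proj (R := ℂ) (φ := fun _ : F × F => ℂ)
          ((a : F) + x.1, b + x.2 + (a : F) * x.1 ^ q))
        - ψt (a : F) b • LinearMap.proj (R := ℂ) (φ := fun _ : F × F => ℂ) x)

noncomputable section

open Polynomial
open scoped Classical

section PowFixed

variable {F : Type*} [Field F] {q : ℕ}

theorem ncard_setOf_pow_eq_mul_le (hq : 1 < q) (c : F) : {x : F | x ^ q = c * x}.ncard ≤ q := by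
  set P : F[X] := X ^ q - C c * X
  have hdeg : P.natDegree = q := by
    rw [natDegree_sub_eq_left_of_natDegree_lt] <;> simp only [natDegree_X_pow]
    exact (natDegree_C_mul_le c X).trans_lt (by rwa [natDegree_X])
  have hP : P ≠ 0 := ne_zero_of_natDegree_gt (hdeg.symm ▸ hq)
  calc {x : F | x ^ q = c * x}.ncard = (P.roots.toFinset : Set F).ncard := by
        congr; ext x; simp [P, mem_roots hP, sub_eq_zero]
    _ ≤ P.natDegree := (Set.ncard_coe_finset _).trans_le
        ((Multiset.toFinset_card_le _).trans (card_roots' P))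
    _ = q := hdeg

theorem sub_pow_of_add_pow (hadd : ∀ x y : F, (x + y) ^ q = x ^ q + y ^ q) (x y : F) :
    (x - y) ^ q = x ^ q - y ^ q := by
  rw [eq_sub_iff_add_eq, ← hadd, sub_add_cancel]

variable (hadd : ∀ x y : F, (x + y) ^ q = x ^ q + y ^ q)

def powSubSelf : F →+ F :=
  AddMonoidHom.mk' (fun x => x ^ q - x) fun x y => by rw [hadd]; ring

def powFixed : AddSubgroup F := (powSubSelf hadd).ker

variable {hadd}

@[simp]
theorem mem_powFixed {a : F} : a ∈ powFixed hadd ↔ a ^ q = a := by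
  simp [powFixed, powSubSelf, sub_eq_zero]

theorem coe_eq_coe_powFixed_iff {x y : F} :
    (x : F ⧸ powFixed hadd) = y ↔ (x - y) ^ q = x - y := by
  rw [QuotientAddGroup.eq_iff_sub_mem, mem_powFixed]

theorem card_quotient_powFixed [Fintype F] (hinv : ∀ x : F, (x ^ q) ^ q = x)
    (hF : Fintype.card F = q ^ 2) (hq : 1 < q) : Nat.card (F ⧸ powFixed hadd) = q := by
  have hK : Nat.card (powFixed hadd) ≤ q := by
    rw [← SetLike.coe_sort_coe, Nat.card_coe_set_eq]
    refine (Set.ncard_le_ncard (fun x hx => ?_)).trans (ncard_setOf_pow_eq_mul_le hq 1)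
    simpa using hx
  have hQ : Nat.card (F ⧸ powFixed hadd) ≤ q := by
    rw [powFixed,
      Nat.card_congr (QuotientAddGroup.quotientKerEquivRange (powSubSelf hadd)).toEquiv,
      ← SetLike.coe_sort_coe, Nat.card_coe_set_eq]
    refine (Set.ncard_le_ncard ?_).trans (ncard_setOf_pow_eq_mul_le hq (-1))
    rintro _ ⟨x, rfl⟩
    simp [powSubSelf, sub_pow_of_add_pow hadd, hinv]
  have hmul := AddSubgroup.card_eq_card_quotient_mul_card_addSubgroup (powFixed hadd)
  rw [Nat.card_eq_fintype_card, hF] at hmul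
  nlinarith

theorem sum_addChar_mul_powFixed {R : Type*} [CommRing R] [IsDomain R] [Fintype F]
    (hinv : ∀ x : F, (x ^ q) ^ q = x) {ψ : AddChar F R} (hψ : ∃ x, ψ (x ^ q) ≠ ψ x) {z : F}
    (hz : z ^ q = -z) :
    ∑ a : powFixed hadd, ψ (a * z) = if z = 0 then (Nat.card (powFixed hadd) : R) else 0 := by
  let χ : AddChar (powFixed hadd) R :=
    ψ.compAddMonoidHom ((AddMonoidHom.mulRight z).comp (powFixed hadd).subtype)
  suffices hχ : χ = 0 ↔ z = 0 by
    simp only [← hχ, Nat.card_eq_fintype_card]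
    exact χ.sum_eq_ite
  refine ⟨fun h => ?_, fun h => by ext; simp [χ, h]⟩
  by_contra hz0
  obtain ⟨x, hx⟩ := hψ
  -- `x ^ q - x` and `z` are both negated by `y ↦ y ^ q`, so their quotient is fixed
  have hc : (x ^ q - x) / z ∈ powFixed hadd := by
    rw [mem_powFixed, div_pow, hz, sub_pow_of_add_pow hadd, hinv, div_neg, ← neg_div, neg_sub]
  have h1 : ψ (x ^ q - x) = 1 := by
    simpa [χ, div_mul_cancel₀ _ hz0] using DFunLike.congr_fun h ⟨_, hc⟩
  apply hx
  rw [← sub_add_cancel (x ^ q) x, AddChar.map_add_eq_mul, h1, one_mul]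

end PowFixed

section Induced

variable {F : Type} [Field F] {q : ℕ} {ψ : AddChar F ℂ} {ψt : F → F → ℂ}

structure IsCharExtending (q : ℕ) (ψ : AddChar F ℂ) (ψt : F → F → ℂ) : Prop where
  map_mul : ∀ a c : F, a ^ q = a → c ^ q = c → ∀ b d : F,
    ψt (a + c) (b + d + a * c ^ q) = ψt a b * ψt c d
  map_center : ∀ b : F, ψt 0 b = ψ b

namespace IsCharExtending

variable {hadd : ∀ x y : F, (x + y) ^ q = x ^ q + y ^ q}

theorem map_zero_zero (hψt : IsCharExtending q ψ ψt) : ψt 0 0 = 1 := by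
  rw [hψt.map_center, AddChar.map_zero_eq_one]

theorem map_add_right (hψt : IsCharExtending q ψ ψt) {a : F} (ha : a ∈ powFixed hadd)
    (b d : F) : ψt a (b + d) = ψt a b * ψ d := by
  have h0 : (0 : F) ^ q = 0 := mem_powFixed.mp (powFixed hadd).zero_mem
  simpa [h0, hψt.map_center] using hψt.map_mul a 0 (mem_powFixed.mp ha) h0 b d

theorem ne_zero (hψt : IsCharExtending q ψ ψt) {a : F} (ha : a ∈ powFixed hadd) (b : F) :
    ψt a b ≠ 0 := by
  intro h
  have := hψt.map_mul a (-a) (mem_powFixed.mp ha) (mem_powFixed.mp (neg_mem ha)) b 0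
  rw [add_neg_cancel, hψt.map_center, h, zero_mul] at this
  exact (ψ.val_isUnit _).ne_zero this

end IsCharExtending

theorem mem_indSubspaceU2_iff {f : F × F → ℂ} :
    f ∈ indSubspaceU2 q F ψt ↔ ∀ a : F, a ^ q = a → ∀ (b : F) (x : F × F),
      f (a + x.1, b + x.2 + a * x.1 ^ q) = ψt a b * f x := by
  simp only [indSubspaceU2, Submodule.mem_iInf, LinearMap.mem_ker, LinearMap.sub_apply,
    LinearMap.proj_apply, LinearMap.smul_apply, smul_eq_mul, sub_eq_zero, Subtype.forall]

theorem apply_eq_of_mem_indSubspaceU2 {f : F × F → ℂ} (hf : f ∈ indSubspaceU2 q F ψt) {c : F}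
    {x : F × F} (hx : (x.1 - c) ^ q = x.1 - c) :
    f x = ψt (x.1 - c) (x.2 - (x.1 - c) * c ^ q) * f (c, 0) := by
  have := mem_indSubspaceU2_iff.mp hf _ hx (x.2 - (x.1 - c) * c ^ q) (c, 0)
  simpa using this

def rightTranslate (q : ℕ) (g : F × F) (f : F × F → ℂ) : F × F → ℂ :=
  fun x => f (x.1 + g.1, x.2 + g.2 + x.1 * g.1 ^ q)

theorem rightTranslate_apply_of_pow_eq_self {f : F × F → ℂ} (hf : f ∈ indSubspaceU2 q F ψt)
    {a : F} (ha : a ^ q = a) (x : F × F) :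
    rightTranslate q (a, 0) f x = ψt a (a * (x.1 - x.1 ^ q)) * f x := by
  rw [← mem_indSubspaceU2_iff.mp hf a ha]
  simp only [rightTranslate]
  congr 2 <;> [ring; (rw [ha]; ring)]

end Induced

section Irreducible

variable {F : Type} [Field F] {q : ℕ} {ψ : AddChar F ℂ} {ψt : F → F → ℂ}

def restrictCoset (K : AddSubgroup F) (t : F ⧸ K) (f : F × F → ℂ) : F × F → ℂ :=
  fun x => if (x.1 : F ⧸ K) = t then f x else 0

theorem sum_restrictCoset (K : AddSubgroup F) [Fintype (F ⧸ K)] (f : F × F → ℂ) :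
    ∑ t, restrictCoset K t f = f := by
  ext x
  simp [restrictCoset, Finset.sum_apply]

variable {hadd : ∀ x y : F, (x + y) ^ q = x ^ q + y ^ q}

theorem smul_restrictCoset_comm {f g : F × F → ℂ} (hf : f ∈ indSubspaceU2 q F ψt)
    (hg : g ∈ indSubspaceU2 q F ψt) (c : F) :
    f (c, 0) • restrictCoset (powFixed hadd) c g =
      g (c, 0) • restrictCoset (powFixed hadd) c f := by
  ext x
  simp only [restrictCoset, Pi.smul_apply, smul_eq_mul]
  split_ifs with hx
  · rw [coe_eq_coe_powFixed_iff] at hx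
    rw [apply_eq_of_mem_indSubspaceU2 hf hx, apply_eq_of_mem_indSubspaceU2 hg hx]
    ring
  · simp

variable [Fintype F]

theorem sum_smul_rightTranslate (hinv : ∀ x : F, (x ^ q) ^ q = x)
    (hψ : ∃ x, ψ (x ^ q) ≠ ψ x) (hψt : IsCharExtending q ψ ψt) {f : F × F → ℂ}
    (hf : f ∈ indSubspaceU2 q F ψt) (c : F) :
    ∑ a : powFixed hadd, (ψt a (a * (c - c ^ q)))⁻¹ • rightTranslate q ((a : F), 0) f =
      (Nat.card (powFixed hadd) : ℂ) • restrictCoset (powFixed hadd) c f := by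
  ext x
  set z := (x.1 - c) - (x.1 - c) ^ q
  have hterm : ∀ a : powFixed hadd, (ψt a (a * (c - c ^ q)))⁻¹ *
      rightTranslate q ((a : F), 0) f x = ψ (a * z) * f x := fun a => by
    have ha := mem_powFixed.mp a.2
    have hsplit : ψt a (a * (x.1 - x.1 ^ q)) = ψt a (a * (c - c ^ q)) * ψ (a * z) := by
      rw [← hψt.map_add_right a.2]
      congr 1
      simp only [z, sub_pow_of_add_pow hadd]
      ring
    rw [rightTranslate_apply_of_pow_eq_self hf ha, hsplit, ← mul_assoc, inv_mul_cancel_left₀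
      (hψt.ne_zero a.2 _)]
  have hz : z ^ q = -z := by
    simp only [z, sub_pow_of_add_pow hadd, hinv]
    ring
  have hz0 : z = 0 ↔ (x.1 : F ⧸ powFixed hadd) = c := by
    rw [coe_eq_coe_powFixed_iff, sub_eq_zero, eq_comm]
  simp only [Finset.sum_apply, Pi.smul_apply, smul_eq_mul, hterm, ← Finset.sum_mul,
    sum_addChar_mul_powFixed hinv hψ hz, hz0, restrictCoset]
  split_ifs <;> simp

variable {W : Submodule ℂ (F × F → ℂ)}

theorem restrictCoset_mem_of_apply_ne_zero (hinv : ∀ x : F, (x ^ q) ^ q = x)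
    (hψ : ∃ x, ψ (x ^ q) ≠ ψ x) (hψt : IsCharExtending q ψ ψt) (hWV : W ≤ indSubspaceU2 q F ψt)
    (hW : ∀ f ∈ W, ∀ g, rightTranslate q g f ∈ W) {h : F × F → ℂ} (hh : h ∈ W) {c : F}
    (hc : h (c, 0) ≠ 0) {g : F × F → ℂ} (hg : g ∈ indSubspaceU2 q F ψt) :
    restrictCoset (powFixed hadd) c g ∈ W := by
  have hrestrict : restrictCoset (powFixed hadd) c h ∈ W := by
    have hcard : (Nat.card (powFixed hadd) : ℂ) ≠ 0 := Nat.cast_ne_zero.mpr Nat.card_pos.ne'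
    rw [← inv_smul_smul₀ hcard (restrictCoset _ c h),
      ← sum_smul_rightTranslate hinv hψ hψt (hWV hh) c]
    exact W.smul_mem _ (W.sum_mem fun a _ => W.smul_mem _ (hW h hh _))
  rw [← inv_smul_smul₀ hc (restrictCoset _ c g), smul_restrictCoset_comm (hWV hh) hg c]
  exact W.smul_mem _ (W.smul_mem _ hrestrict)

theorem eq_bot_or_eq_indSubspaceU2 (hadd : ∀ x y : F, (x + y) ^ q = x ^ q + y ^ q)
    (hinv : ∀ x : F, (x ^ q) ^ q = x) (hψ : ∃ x, ψ (x ^ q) ≠ ψ x)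
    (hψt : IsCharExtending q ψ ψt) (hWV : W ≤ indSubspaceU2 q F ψt)
    (hW : ∀ f ∈ W, ∀ g, rightTranslate q g f ∈ W) :
    W = ⊥ ∨ W = indSubspaceU2 q F ψt := by
  refine or_iff_not_imp_left.mpr fun hne => le_antisymm hWV fun g hg => ?_
  obtain ⟨f, hf, hf0⟩ := W.ne_bot_iff.mp hne
  obtain ⟨x₀, hx₀ : f x₀ ≠ 0⟩ := Function.ne_iff.mp hf0
  rw [← sum_restrictCoset (powFixed hadd) g]
  refine W.sum_mem fun t _ => ?_
  obtain ⟨c, rfl⟩ := QuotientAddGroup.mk_surjective t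
  refine restrictCoset_mem_of_apply_ne_zero hinv hψ hψt hWV hW
    (hW f hf (x₀.1 - c, x₀.2 - c * (x₀.1 - c) ^ q)) ?_ hg
  convert hx₀ using 1
  simp only [rightTranslate]
  congr 1
  ext <;> ring

end Irreducible

section Dimension

variable {F : Type} [Field F] {q : ℕ} {ψ : AddChar F ℂ}
  {hadd : ∀ x y : F, (x + y) ^ q = x ^ q + y ^ q}

/-- The element of `indSubspaceU2` taking the value `v t` at `(t.out, 0)`. -/
def ofCosetFun (hadd : ∀ x y : F, (x + y) ^ q = x ^ q + y ^ q) (ψt : F → F → ℂ)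
    (v : F ⧸ powFixed hadd → ℂ) (x : F × F) : ℂ :=
  let s := (x.1 : F ⧸ powFixed hadd).out
  ψt (x.1 - s) (x.2 - (x.1 - s) * s ^ q) * v x.1

theorem sub_out_mem_powFixed (x : F) : x - (x : F ⧸ powFixed hadd).out ∈ powFixed hadd :=
  QuotientAddGroup.eq_iff_sub_mem.mp (QuotientAddGroup.out_eq' _).symm

theorem ofCosetFun_mem {ψt : F → F → ℂ} (hψt : IsCharExtending q ψ ψt)
    (v : F ⧸ powFixed hadd → ℂ) : ofCosetFun hadd ψt v ∈ indSubspaceU2 q F ψt := by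
  refine mem_indSubspaceU2_iff.mpr fun a ha b x => ?_
  have hcoset : ((a + x.1 : F) : F ⧸ powFixed hadd) = x.1 :=
    coe_eq_coe_powFixed_iff.mpr (by rwa [add_sub_cancel_right])
  simp only [ofCosetFun, hcoset]
  set s := (x.1 : F ⧸ powFixed hadd).out
  have hs : (x.1 - s) ^ q = x.1 - s := mem_powFixed.mp (sub_out_mem_powFixed x.1)
  have hmul := hψt.map_mul a (x.1 - s) ha hs b (x.2 - (x.1 - s) * s ^ q)
  rw [hs] at hmul
  rw [← mul_assoc, ← hmul]
  congr 2
  · ring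
  · linear_combination a * (sub_pow_of_add_pow hadd x.1 s).symm + a * hs

def indSubspaceU2EquivFun {ψt : F → F → ℂ} (hψt : IsCharExtending q ψ ψt) :
    indSubspaceU2 q F ψt ≃ₗ[ℂ] (F ⧸ powFixed hadd → ℂ) where
  toFun f t := f.1 (t.out, 0)
  map_add' _ _ := rfl
  map_smul' _ _ := rfl
  invFun v := ⟨ofCosetFun hadd ψt v, ofCosetFun_mem hψt v⟩
  left_inv f := Subtype.ext <| funext fun x =>
    (apply_eq_of_mem_indSubspaceU2 f.2 (mem_powFixed.mp (sub_out_mem_powFixed x.1))).symm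
  right_inv v := funext fun t => by
    simp [ofCosetFun, hψt.map_zero_zero]

theorem finrank_indSubspaceU2 [Fintype F] {ψt : F → F → ℂ} (hψt : IsCharExtending q ψ ψt)
    (hadd : ∀ x y : F, (x + y) ^ q = x ^ q + y ^ q) (hinv : ∀ x : F, (x ^ q) ^ q = x)
    (hF : Fintype.card F = q ^ 2) (hq : 1 < q) :
    Module.finrank ℂ (indSubspaceU2 q F ψt) = q := by
  rw [(indSubspaceU2EquivFun (hadd := hadd) hψt).finrank_eq, Module.finrank_fintype_fun_eq_card,
    ← Nat.card_eq_fintype_card, card_quotient_powFixed hinv hF hq]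

end Dimension

end

/-- Let U = U_2^{2,q}(F_{q²}) = {1 + aτ + bτ²} with multiplication
(1+aτ+bτ²)(1+cτ+dτ²) = 1 + (a+c)τ + (b+d+ac^q)τ², ψ an additive character of
F_{q²} with trivial Galois stabilizer, A = {1 + aτ + bτ² : a ∈ F_q}, and ψ̃ any
character of A with ψ̃(1 + bτ²) = ψ(b).  Then Ind_A^U(ψ̃) — realized as the space
of ψ̃-equivariant functions on U with U acting by right translation — is an
irreducible representation of U of dimension q. -/
theorem stmt_14 (p m q : ℕ) (hp : p.Prime) (hm : 0 < m) (hq : q = p ^ m)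
    (F : Type) [Field F] [Fintype F] [CharP F p] (hF : Fintype.card F = q ^ 2)
    (ψ : AddChar F ℂ) (hψ : ∃ x : F, ψ (x ^ q) ≠ ψ x)
    (ψt : F → F → ℂ)
    (hmul : ∀ a c : F, a ^ q = a → c ^ q = c → ∀ b d : F,
      ψt (a + c) (b + d + a * c ^ q) = ψt a b * ψt c d)
    (hres : ∀ b : F, ψt 0 b = ψ b) :
    Module.finrank ℂ ↥(indSubspaceU2 q F ψt) = q ∧
    ∀ W : Submodule ℂ (F × F → ℂ), W ≤ indSubspaceU2 q F ψt →
      (∀ f ∈ W, ∀ g : F × F,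
        (fun x : F × F => f (x.1 + g.1, x.2 + g.2 + x.1 * g.1 ^ q)) ∈ W) →
      W = ⊥ ∨ W = indSubspaceU2 q F ψt := by
  have := Fact.mk hp
  have hadd : ∀ x y : F, (x + y) ^ q = x ^ q + y ^ q := fun x y => hq ▸ add_pow_char_pow x y p m
  have hinv : ∀ x : F, (x ^ q) ^ q = x := fun x => by
    rw [← pow_mul, ← sq, ← hF, FiniteField.pow_card]
  have hq1 : 1 < q := hq ▸ Nat.one_lt_pow hm.ne' hp.one_lt
  have hψt : IsCharExtending q ψ ψt := ⟨hmul, hres⟩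
  exact ⟨finrank_indSubspaceU2 hψt hadd hinv hF hq1,
    fun W hWV hW => eq_bot_or_eq_indSubspaceU2 hadd hinv hψ hψt hWV hW⟩
end

section
/- Let q be a prime power, h ≥ 3, F = F_{q^2}. Fix g₂ ∈ F with g₂ ∉ F_q and ε ∈ F. The number of tuples (x₁,x₂,x₃,x₄) ∈ F̄_q⁴ satisfying x₁^{q²} = x₁, x₂^{q²} = x₂, x₃^{q²} − x₃ = (g₂^q − g₂)x₁, x₄^{q²} − x₄ = x₁^q(x₃^{q²} − x₃), and x₄^{q²} − x₄ = ε equals q⁶ if ε = 0, equals q⁶(q+1) if ε ≠ 0 and Tr_{F/F_q}(ε) = 0, and equals 0 otherwise. -/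
/-!
Put `d = g₂^q - g₂`, so that `d^q = -d`. Given the third and fifth equations, the fourth one
says `d x₁^{q+1} = ε`; then `x₂` ranges over `F_{q²}` and `x₃`, `x₄` over fibres of the
Artin–Schreier map `y ↦ y^{q²} - y`, each of `q²` points. It remains to count `x₁ ∈ F_{q²}` with
`d x₁^{q+1} = ε`. For `ε = 0` only `x₁ = 0` does. For `ε ≠ 0` the norm `x₁^{q+1} = ε/d` must lie
in `F_q`, i.e. `ε + ε^q = 0`, and then all `q + 1` roots of `X^{q+1} - ε/d` lie in `F_{q²}`,
since a nonzero `x` lies in `F_{q²}` exactly when its norm lies in `F_q`.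
-/

open scoped Classical

open Polynomial

theorem Set.ncard_setOf_fst_mem_snd_mem {α β : Type*} {s : Set α} {t : α → Set β} {n : ℕ}
    (hn : n ≠ 0) (ht : ∀ a ∈ s, (t a).ncard = n) :
    {x : α × β | x.1 ∈ s ∧ x.2 ∈ t x.1}.ncard = s.ncard * n := by
  by_cases hs : s.Finite
  · have := hs.fintype
    have (a : s) : Finite (t a) := finite_of_ncard_ne_zero (ht a a.2 ▸ hn)
    let e : {x : α × β | x.1 ∈ s ∧ x.2 ∈ t x.1} ≃ Σ a : s, t a :=
      { toFun x := ⟨⟨x.1.1, x.2.1⟩, ⟨x.1.2, x.2.2⟩⟩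
        invFun y := ⟨(y.1, y.2), y.1.2, y.2.2⟩
        left_inv _ := rfl
        right_inv _ := rfl }
    calc {x : α × β | x.1 ∈ s ∧ x.2 ∈ t x.1}.ncard = Nat.card (Σ a : s, t a) := by
          rw [← Nat.card_coe_set_eq, Nat.card_congr e]
      _ = ∑ a : s, n := by rw [Nat.card_sigma]; exact Finset.sum_congr rfl fun a _ => ht a a.2
      _ = s.ncard * n := by rw [Finset.sum_const, smul_eq_mul, Finset.card_univ,
          ← Nat.card_eq_fintype_card, Nat.card_coe_set_eq]
  · have hfst : s ⊆ Prod.fst '' {x : α × β | x.1 ∈ s ∧ x.2 ∈ t x.1} := fun a ha => by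
      obtain ⟨b, hb⟩ := nonempty_of_ncard_ne_zero (ht a ha ▸ hn)
      exact ⟨(a, b), ⟨ha, hb⟩, rfl⟩
    rw [Infinite.ncard hs, Infinite.ncard ((Infinite.mono hfst hs).of_image _), zero_mul]

section RootCounting

variable {K : Type*} [Field K] [IsAlgClosed K]

theorem ncard_setOf_eval_eq_zero_of_separable {f : K[X]} (hf : f.Separable) :
    {x : K | f.eval x = 0}.ncard = f.natDegree := by
  have hroots : {x : K | f.eval x = 0} = ↑f.roots.toFinset := by
    ext x
    simp [mem_roots hf.ne_zero, IsRoot]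
  rw [hroots, Set.ncard_coe_finset, Multiset.toFinset_card_of_nodup (nodup_roots hf),
    splits_iff_card_roots.mp (IsAlgClosed.splits f)]

theorem ncard_setOf_pow_sub_self_eq {n : ℕ} (hn : 1 < n) (hnK : (n : K) = 0) (c : K) :
    {x : K | x ^ n - x = c}.ncard = n := by
  have hdeg : (X ^ n - X - C c : K[X]).natDegree = n := by
    rw [natDegree_sub_C, natDegree_sub_eq_left_of_natDegree_lt (by simpa using hn),
      natDegree_X_pow]
  have hsep : (X ^ n - X - C c : K[X]).Separable := by
    have hder : derivative (X ^ n - X - C c : K[X]) = -1 := by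
      simp [derivative_X_pow, hnK]
    rw [Separable, hder]
    exact isCoprime_one_right.neg_right
  calc {x : K | x ^ n - x = c}.ncard = {x : K | (X ^ n - X - C c : K[X]).eval x = 0}.ncard := by
        simp only [eval_sub, eval_pow, eval_X, eval_C, sub_eq_zero]
    _ = n := by rw [ncard_setOf_eval_eq_zero_of_separable hsep, hdeg]

theorem ncard_setOf_pow_eq {n : ℕ} (hnK : (n : K) ≠ 0) {a : K} (ha : a ≠ 0) :
    {x : K | x ^ n = a}.ncard = n := by
  calc {x : K | x ^ n = a}.ncard = {x : K | (X ^ n - C a : K[X]).eval x = 0}.ncard := by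
        simp only [eval_sub, eval_pow, eval_X, eval_C, sub_eq_zero]
    _ = n := by
      rw [ncard_setOf_eval_eq_zero_of_separable (separable_X_pow_sub_C a hnK ha),
        natDegree_X_pow_sub_C]

end RootCounting

theorem pow_pow_sq_eq_self_iff {M : Type*} [CommMonoidWithZero M] [IsCancelMulZero M] {q : ℕ}
    {x : M} (hx : x ≠ 0) : x ^ q ^ 2 = x ↔ (x ^ (q + 1)) ^ q = x ^ (q + 1) := by
  have hnorm : (x ^ (q + 1)) ^ q = x ^ q ^ 2 * x ^ q := by
    rw [← pow_mul, ← pow_add, add_mul, one_mul, sq]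
  rw [hnorm, pow_succ' x q, mul_left_inj' (pow_ne_zero q hx)]

theorem pow_expChar_pow_sub_self_pow_eq_neg {R : Type*} [CommRing R] {p : ℕ} [ExpChar R p]
    (m : ℕ) {g : R} (hg : g ^ (p ^ m) ^ 2 = g) : (g ^ p ^ m - g) ^ p ^ m = -(g ^ p ^ m - g) := by
  rw [sub_pow_expChar_pow, ← pow_mul, ← sq, hg, neg_sub]

theorem ncard_setOf_pow_sq_eq_self_and_mul_pow_eq {K : Type*} [Field K] [IsAlgClosed K] {q : ℕ}
    (hq : q ≠ 0) (hqK : ((q + 1 : ℕ) : K) ≠ 0) {d : K} (hd0 : d ≠ 0) (hd : d ^ q = -d) (ε : K) :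
    {x : K | x ^ q ^ 2 = x ∧ d * x ^ (q + 1) = ε}.ncard =
      if ε = 0 then 1 else if ε + ε ^ q = 0 then q + 1 else 0 := by
  split_ifs with hε htr
  · have hzero : {x : K | x ^ q ^ 2 = x ∧ d * x ^ (q + 1) = ε} = {0} := by
      ext x
      simp only [Set.mem_ofPred_eq, Set.mem_singleton_iff, hε, mul_eq_zero, hd0, false_or,
        pow_eq_zero_iff (Nat.succ_ne_zero q), and_iff_right_iff_imp]
      rintro rfl
      exact zero_pow (pow_ne_zero 2 hq)
    rw [hzero, Set.ncard_singleton]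
  · have hεd : (ε / d) ^ q = ε / d := by
      rw [div_pow, hd, eq_neg_of_add_eq_zero_right htr, neg_div_neg_eq]
    have hnorm :
        {x : K | x ^ q ^ 2 = x ∧ d * x ^ (q + 1) = ε} = {x : K | x ^ (q + 1) = ε / d} := by
      ext x
      simp only [Set.mem_ofPred_eq, eq_div_iff hd0, mul_comm d]
      refine ⟨And.right, fun hx => ⟨?_, hx⟩⟩
      have hx0 : x ≠ 0 := by
        rintro rfl
        exact hε (by simpa using hx.symm)
      rw [pow_pow_sq_eq_self_iff hx0, (eq_div_iff hd0).2 hx, hεd]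
    rw [hnorm, ncard_setOf_pow_eq hqK (div_ne_zero hε hd0)]
  · suffices hempty : {x : K | x ^ q ^ 2 = x ∧ d * x ^ (q + 1) = ε} = ∅ by
      rw [hempty, Set.ncard_empty]
    refine Set.eq_empty_of_forall_notMem ?_
    rintro x ⟨hfix, hx⟩
    have hx0 : x ≠ 0 := by
      rintro rfl
      exact hε (by simpa [hq] using hx.symm)
    apply htr
    calc ε + ε ^ q = d * x ^ (q + 1) + d ^ q * (x ^ (q + 1)) ^ q := by rw [← hx, mul_pow]
      _ = 0 := by rw [hd, (pow_pow_sq_eq_self_iff hx0).1 hfix]; ring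

theorem ncard_setOf_eq_ncard_setOf_mul_pow {R : Type*} [CommRing R] {n : ℕ} (hn : n ≠ 0)
    (hAS : ∀ c : R, {y : R | y ^ n - y = c}.ncard = n) (q : ℕ) (d ε : R) :
    {x : R × R × R × R |
        x.1 ^ n = x.1 ∧
        x.2.1 ^ n = x.2.1 ∧
        x.2.2.1 ^ n - x.2.2.1 = d * x.1 ∧
        x.2.2.2 ^ n - x.2.2.2 = x.1 ^ q * (x.2.2.1 ^ n - x.2.2.1) ∧
        x.2.2.2 ^ n - x.2.2.2 = ε}.ncard =
      {y : R | y ^ n = y ∧ d * y ^ (q + 1) = ε}.ncard * n ^ 3 := by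
  have hfix : {y : R | y ^ n = y}.ncard = n := by
    simpa only [sub_eq_zero] using hAS 0
  have hfibred : {x : R × R × R × R |
        x.1 ^ n = x.1 ∧
        x.2.1 ^ n = x.2.1 ∧
        x.2.2.1 ^ n - x.2.2.1 = d * x.1 ∧
        x.2.2.2 ^ n - x.2.2.2 = x.1 ^ q * (x.2.2.1 ^ n - x.2.2.1) ∧
        x.2.2.2 ^ n - x.2.2.2 = ε} =
      {x | x.1 ∈ {y | y ^ n = y ∧ d * y ^ (q + 1) = ε} ∧
        x.2 ∈ {y | y ^ n = y} ×ˢ {y | y ^ n - y = d * x.1} ×ˢ {y | y ^ n - y = ε}} := by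
    ext ⟨x₁, x₂, x₃, x₄⟩
    simp only [Set.mem_ofPred_eq, Set.mem_prod]
    constructor
    · rintro ⟨h₁, h₂, h₃, h₄, h₅⟩
      exact ⟨⟨h₁, by rw [← h₅, h₄, h₃]; ring⟩, h₂, h₃, h₅⟩
    · rintro ⟨⟨h₁, hε⟩, h₂, h₃, h₅⟩
      exact ⟨h₁, h₂, h₃, by rw [h₅, h₃, ← hε]; ring, h₅⟩
  rw [hfibred]
  exact Set.ncard_setOf_fst_mem_snd_mem
    (t := fun a => {y | y ^ n = y} ×ˢ {y | y ^ n - y = d * a} ×ˢ {y | y ^ n - y = ε})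
    (pow_ne_zero 3 hn) fun a _ => by rw [Set.ncard_prod, Set.ncard_prod, hfix, hAS, hAS]; ring

theorem stmt_16_general (p m q : ℕ) (hp : p.Prime) (hm : 0 < m) (hq : q = p ^ m)
    (K : Type) [Field K] [IsAlgClosed K] [CharP K p]
    (g₂ : K) (hg₂F : g₂ ^ (q ^ 2) = g₂) (hg₂ : g₂ ^ q ≠ g₂)
    (ε : K) :
    Set.ncard {x : K × K × K × K |
        x.1 ^ (q ^ 2) = x.1 ∧
        x.2.1 ^ (q ^ 2) = x.2.1 ∧
        x.2.2.1 ^ (q ^ 2) - x.2.2.1 = (g₂ ^ q - g₂) * x.1 ∧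
        x.2.2.2 ^ (q ^ 2) - x.2.2.2 = x.1 ^ q * (x.2.2.1 ^ (q ^ 2) - x.2.2.1) ∧
        x.2.2.2 ^ (q ^ 2) - x.2.2.2 = ε} =
      if ε = 0 then q ^ 6 else if ε + ε ^ q = 0 then q ^ 6 * (q + 1) else 0 := by
  have : Fact p.Prime := ⟨hp⟩
  have hq1 : 1 < q := hq ▸ Nat.one_lt_pow hm.ne' hp.one_lt
  have hqK : (q : K) = 0 := by
    rw [hq, CharP.cast_eq_zero_iff K p]
    exact dvd_pow_self p hm.ne'
  have hd : (g₂ ^ q - g₂) ^ q = -(g₂ ^ q - g₂) := by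
    subst hq
    exact pow_expChar_pow_sub_self_pow_eq_neg m hg₂F
  have hAS (c : K) : {x : K | x ^ q ^ 2 - x = c}.ncard = q ^ 2 :=
    ncard_setOf_pow_sub_self_eq (by nlinarith) (by push_cast [hqK]; ring) c
  rw [ncard_setOf_eq_ncard_setOf_mul_pow (by positivity) hAS,
    ncard_setOf_pow_sq_eq_self_and_mul_pow_eq (by omega) (by push_cast [hqK]; simp)
      (sub_ne_zero_of_ne hg₂) hd]
  split_ifs <;> ring

/-- Over F̄_q, fixing g₂ ∈ F_{q²} \ F_q and ε ∈ F_{q²}, the number of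
tuples (x₁,x₂,x₃,x₄) with x₁^{q²}=x₁, x₂^{q²}=x₂, x₃^{q²}−x₃ = (g₂^q−g₂)x₁,
x₄^{q²}−x₄ = x₁^q(x₃^{q²}−x₃) and x₄^{q²}−x₄ = ε equals q⁶ if ε = 0,
q⁶(q+1) if 0 ≠ ε ∈ ker(Tr), and 0 otherwise. -/
theorem stmt_16 (p m q h : ℕ) (hp : p.Prime) (hm : 0 < m) (hq : q = p ^ m) (hh : 3 ≤ h)
    (K : Type) [Field K] [IsAlgClosed K] [CharP K p]
    (g₂ : K) (hg₂F : g₂ ^ (q ^ 2) = g₂) (hg₂ : g₂ ^ q ≠ g₂)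
    (ε : K) (hεF : ε ^ (q ^ 2) = ε) :
    Set.ncard {x : K × K × K × K |
        x.1 ^ (q ^ 2) = x.1 ∧
        x.2.1 ^ (q ^ 2) = x.2.1 ∧
        x.2.2.1 ^ (q ^ 2) - x.2.2.1 = (g₂ ^ q - g₂) * x.1 ∧
        x.2.2.2 ^ (q ^ 2) - x.2.2.2 = x.1 ^ q * (x.2.2.1 ^ (q ^ 2) - x.2.2.1) ∧
        x.2.2.2 ^ (q ^ 2) - x.2.2.2 = ε} =
      if ε = 0 then q ^ 6 else if ε + ε ^ q = 0 then q ^ 6 * (q + 1) else 0 :=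
  stmt_16_general p m q hp hm hq K g₂ hg₂F hg₂ ε
end
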